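/- arXiv:2210.06153 — 5 statements merged into one kernel-verified Lean document; each statement's English description precedes it below -/
import Mathlib

section
/- Let a : ℕ → ℂ be a sequence and N ≥ 1 an integer such that the partial sums A(x) = ∑_{n ≤ x} a(n) satisfy A(x) = o((log x)^N) as x → ∞ and A(x) = O((log x)^N). Then ∫₁^∞ |A(x)| / x^(1+σ) dx = o(1/σ^(N+1)) as σ → 0⁺. -/
/-!
Fix `ε > 0`. Past some threshold `‖A x‖ ≤ ε (log x)^N`, and below it `‖A x‖` is bounded by the
finitely many `‖a n‖` involved, so `‖A x‖ ≤ M + ε (log x)^N` for all `x ≥ 1`. Bounding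
`(log x)^N ≤ (2N/σ)^N x^(σ/2)` and integrating `x^(-1-σ/2)` over `(1, ∞)` gives
`∫ ≤ 2M/σ + 2ε (2N)^N / σ^(N+1)`. As `N ≥ 1`, the first term is `o(σ^(-N-1))`, and `ε` is arbitrary.
-/

open Filter Asymptotics MeasureTheory Topology Real Set

theorem log_pow_le_mul_rpow (N : ℕ) {s x : ℝ} (hs : 0 < s) (hx : 1 ≤ x) :
    log x ^ N ≤ (N / s) ^ N * x ^ s := by
  rcases N.eq_zero_or_pos with rfl | hN
  · simpa using one_le_rpow hx hs.le
  have hNs : 0 < s / N := by positivity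
  have hlog : log x ≤ N / s * x ^ (s / N) := by
    calc log x ≤ x ^ (s / N) / (s / N) := log_le_rpow_div (by linarith) hNs
      _ = N / s * x ^ (s / N) := by field_simp
  calc log x ^ N ≤ (N / s * x ^ (s / N)) ^ N := by gcongr; exact log_nonneg hx
    _ = (N / s) ^ N * x ^ s := by
      rw [mul_pow, ← rpow_natCast (x ^ _), ← rpow_mul (by linarith),
        div_mul_cancel₀ _ (by positivity)]

theorem setIntegral_Ioi_one_div_rpow_le (N : ℕ) {f : ℝ → ℝ} {M ε σ : ℝ}
    (hf₀ : ∀ x, 1 < x → 0 ≤ f x) (hM : 0 ≤ M) (hε : 0 ≤ ε) (hσ : 0 < σ)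
    (hf : ∀ x, 1 < x → f x ≤ M + ε * log x ^ N) :
    ∫ x in Ioi 1, f x / x ^ (1 + σ) ≤ (M + ε * (2 * N / σ) ^ N) * (2 / σ) := by
  set C := M + ε * (2 * N / σ) ^ N
  have hpt : ∀ x ∈ Ioi (1 : ℝ), f x / x ^ (1 + σ) ≤ C * x ^ (-1 - σ / 2) := by
    intro x (hx : 1 < x)
    have hx₀ : 0 < x := by linarith
    have hlog := log_pow_le_mul_rpow N (half_pos hσ) hx.le
    rw [div_div_eq_mul_div, mul_comm (N : ℝ)] at hlog
    rw [div_le_iff₀ (rpow_pos_of_pos hx₀ _), mul_assoc, ← rpow_add hx₀,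
      show -1 - σ / 2 + (1 + σ) = σ / 2 by ring]
    calc f x ≤ M + ε * ((2 * N / σ) ^ N * x ^ (σ / 2)) := by
          grw [hf x hx, hlog]
      _ ≤ C * x ^ (σ / 2) := by
          have := le_mul_of_one_le_right hM (one_le_rpow hx.le (by positivity : 0 ≤ σ / 2))
          simp only [C]
          linarith
  have hint : IntegrableOn (fun x : ℝ => x ^ (-1 - σ / 2)) (Ioi 1) :=
    integrableOn_Ioi_rpow_of_lt (by linarith) one_pos
  calc ∫ x in Ioi 1, f x / x ^ (1 + σ) ≤ ∫ x in Ioi 1, C * x ^ (-1 - σ / 2) :=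
        setIntegral_mono_of_nonneg
          (fun x (hx : 1 < x) => div_nonneg (hf₀ x hx) (rpow_nonneg (by linarith) _)) hpt
          (hint.const_mul C)
    _ = C * (2 / σ) := by
        rw [integral_const_mul, integral_Ioi_rpow_of_lt (by linarith) one_pos, one_rpow,
          show -1 - σ / 2 + 1 = -(σ / 2) by ring]
        field_simp

theorem exists_norm_sum_Icc_floor_le {E : Type*} [SeminormedAddCommGroup E] (a : ℕ → E)
    {g : ℝ → ℝ} (ho : (fun x : ℝ => ∑ n ∈ Finset.Icc 1 ⌊x⌋₊, a n) =o[atTop] g)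
    {ε : ℝ} (hε : 0 < ε) :
    ∃ M, 0 ≤ M ∧ ∀ x, ‖∑ n ∈ Finset.Icc 1 ⌊x⌋₊, a n‖ ≤ M + ε * ‖g x‖ := by
  obtain ⟨T, hT⟩ := eventually_atTop.mp (ho.def hε)
  refine ⟨∑ n ∈ Finset.Icc 1 ⌊T⌋₊, ‖a n‖, by positivity, fun x => ?_⟩
  rcases le_total x T with hxT | hTx
  · calc ‖∑ n ∈ Finset.Icc 1 ⌊x⌋₊, a n‖ ≤ ∑ n ∈ Finset.Icc 1 ⌊x⌋₊, ‖a n‖ := norm_sum_le _ _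
      _ ≤ ∑ n ∈ Finset.Icc 1 ⌊T⌋₊, ‖a n‖ :=
          Finset.sum_le_sum_of_subset_of_nonneg
            (Finset.Icc_subset_Icc_right (Nat.floor_le_floor hxT)) fun _ _ _ => norm_nonneg _
      _ ≤ _ := le_add_of_nonneg_right (by positivity)
  · exact (hT x hTx).trans (le_add_of_nonneg_left (by positivity))

theorem stmt2_general (a : ℕ → ℂ) (N : ℕ) (hN : 1 ≤ N)
    (A : ℝ → ℂ) (hA : ∀ x : ℝ, A x = ∑ n ∈ Finset.Icc 1 ⌊x⌋₊, a n)
    (ho : A =o[atTop] fun x : ℝ => (Real.log x) ^ N) :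
    (fun σ : ℝ => ∫ x in Set.Ioi (1 : ℝ), ‖A x‖ / x ^ (1 + σ)) =o[𝓝[>] (0 : ℝ)]
      fun σ : ℝ => 1 / σ ^ (N + 1) := by
  obtain rfl : A = _ := funext hA
  refine isLittleO_iff.mpr fun c hc => ?_
  set ε := c / (4 * (2 * N) ^ N)
  have hε : 0 < ε := by positivity
  obtain ⟨M, hM, hAM⟩ := exists_norm_sum_Icc_floor_le a ho hε
  have hsmall : ∀ᶠ σ in 𝓝[>] (0 : ℝ), 2 * M * σ ^ N < c / 2 := by
    have h := ((continuous_pow N).tendsto' (0 : ℝ) 0 (zero_pow (by omega))).const_mul (2 * M)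
    rw [mul_zero] at h
    exact (h.mono_left nhdsWithin_le_nhds).eventually (gt_mem_nhds (half_pos hc))
  filter_upwards [self_mem_nhdsWithin, hsmall] with σ (hσ : 0 < σ) hσM
  rw [norm_of_nonneg (setIntegral_nonneg measurableSet_Ioi fun x (hx : 1 < x) => by positivity),
    norm_of_nonneg (by positivity)]
  calc _ ≤ (M + ε * (2 * N / σ) ^ N) * (2 / σ) :=
        setIntegral_Ioi_one_div_rpow_le N (fun x _ => norm_nonneg _) hM hε.le hσ fun x hx =>
          (hAM x).trans_eq (by rw [norm_pow, norm_of_nonneg (log_nonneg hx.le)])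
    _ = (2 * M * σ ^ N + c / 2) / σ ^ (N + 1) := by
        rw [div_pow, mul_pow]
        simp only [ε]
        field_simp
        ring
    _ ≤ c * (1 / σ ^ (N + 1)) := by
        rw [mul_one_div]; gcongr; linarith

theorem stmt2 (a : ℕ → ℂ) (N : ℕ) (hN : 1 ≤ N)
    (A : ℝ → ℂ) (hA : ∀ x : ℝ, A x = ∑ n ∈ Finset.Icc 1 ⌊x⌋₊, a n)
    (ho : A =o[atTop] fun x : ℝ => (Real.log x) ^ N)
    (hO : A =O[atTop] fun x : ℝ => (Real.log x) ^ N) :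
    (fun σ : ℝ => ∫ x in Set.Ioi (1 : ℝ), ‖A x‖ / x ^ (1 + σ)) =o[𝓝[>] (0 : ℝ)]
      fun σ : ℝ => 1 / σ ^ (N + 1) :=
  stmt2_general a N hN A hA ho
end

section
/- Let χ be a non-principal Dirichlet character modulo q, let S be a finite set of primes, and let f be the completely multiplicative function with f(p) = χ(p) for all primes p ∉ S and |f(p)| ≤ 1 for p ∈ S. Then ∑_{n ≤ x} f(n) = O((log x)^{|S|}) as x → ∞. -/
/-
Induct on `S`. For `S = ∅` the function agrees with `χ` on positive integers, and the partial
sums of `χ` are bounded by `q` because `χ` sums to zero over every period.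

For `S = insert p S'`, let `g` be `f` with its value at `p` replaced by `χ p`; the inductive
hypothesis applies to `g`. Write `F`, `G` for the partial sums of `f`, `g`. Sorting `n ≤ N` by the
exact power `p ^ k` dividing it, and noting that `f = g` off multiples of `p`, gives
  `F(N) = ∑_{k ≤ log_p N} f(p)^k (G(N / p^k) - χ(p) G(N / p^(k+1)))`,
a sum of `O(log N)` terms each bounded by the inductive bound for `G`, at the cost of one factor
of `log N`.
-/

open Filter Asymptotics Finset

namespace MonoidWithZeroHom

variable {R : Type*}

theorem ext_nat_prime [MonoidWithZero R] {φ ψ : ℕ →*₀ R} (h : ∀ p, p.Prime → φ p = ψ p) :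
    φ = ψ :=
  DFunLike.ext _ _ fun n => by induction n using Nat.recOnMul <;> simp_all

def ofPos [MonoidWithZero R] (f : ℕ → R) (hf1 : f 1 = 1)
    (hmul : ∀ m n, m ≠ 0 → n ≠ 0 → f (m * n) = f m * f n) : ℕ →*₀ R where
  toFun n := if n = 0 then 0 else f n
  map_zero' := if_pos rfl
  map_one' := by simp [hf1]
  map_mul' m n := by
    rcases eq_or_ne m 0 with rfl | hm
    · simp
    rcases eq_or_ne n 0 with rfl | hn
    · simp
    simp [hm, hn, hmul m n hm hn]

theorem ofPos_apply [MonoidWithZero R] {f : ℕ → R} (hf1 : f 1 = 1)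
    (hmul : ∀ m n, m ≠ 0 → n ≠ 0 → f (m * n) = f m * f n) {n : ℕ} (hn : n ≠ 0) :
    ofPos f hf1 hmul n = f n :=
  if_neg hn

theorem sum_Icc_ofPos [CommSemiring R] {f : ℕ → R}
    (hf1 : f 1 = 1) (hmul : ∀ m n, m ≠ 0 → n ≠ 0 → f (m * n) = f m * f n) (N : ℕ) :
    ∑ n ∈ Icc 1 N, ofPos f hf1 hmul n = ∑ n ∈ Icc 1 N, f n :=
  sum_congr rfl fun n hn => ofPos_apply hf1 hmul (by simp at hn; omega)

section updateAtPrime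

variable [CommMonoidWithZero R]

def updateAtPrime (φ : ℕ →*₀ R) (p : ℕ) (c : R) : ℕ →*₀ R where
  toFun n := c ^ n.factorization p * φ (ordCompl[p] n)
  map_zero' := by simp
  map_one' := by simp
  map_mul' m n := by
    rcases eq_or_ne m 0 with rfl | hm
    · simp
    rcases eq_or_ne n 0 with rfl | hn
    · simp
    rw [Nat.ordCompl_mul, map_mul, Nat.factorization_mul hm hn, Finsupp.add_apply, pow_add,
      mul_mul_mul_comm]

variable (φ : ℕ →*₀ R) {p : ℕ} (c : R)

theorem updateAtPrime_apply_of_not_dvd {n : ℕ} (h : ¬p ∣ n) : φ.updateAtPrime p c n = φ n := by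
  simp [updateAtPrime, Nat.factorization_eq_zero_of_not_dvd h]

theorem updateAtPrime_apply_self (hp : p.Prime) : φ.updateAtPrime p c p = c := by
  simp [updateAtPrime, hp.factorization_self, hp.pos]

theorem updateAtPrime_apply_prime_of_ne (hp : p.Prime) {r : ℕ} (hr : r.Prime) (hrp : r ≠ p) :
    φ.updateAtPrime p c r = φ r :=
  updateAtPrime_apply_of_not_dvd φ c fun h => hrp ((Nat.prime_dvd_prime_iff_eq hp hr).1 h).symm

end updateAtPrime

end MonoidWithZeroHom

theorem Nat.filter_dvd_Icc_one_eq_image {p : ℕ} (hp : p ≠ 0) (N : ℕ) :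
    {n ∈ Icc 1 N | p ∣ n} = (Icc 1 (N / p)).image (p * ·) := by
  ext n
  simp only [mem_filter, mem_Icc, mem_image]
  constructor
  · rintro ⟨⟨h1, hN⟩, m, rfl⟩
    exact ⟨m, ⟨Nat.pos_of_mul_pos_left h1, (Nat.le_div_iff_mul_le (by omega)).2 (by linarith)⟩,
      rfl⟩
  · rintro ⟨m, ⟨h1, hm⟩, rfl⟩
    exact ⟨⟨Nat.mul_pos (by omega) h1, by linarith [Nat.mul_le_of_le_div p m N hm]⟩,
      dvd_mul_right p m⟩

section Semiring

variable {R : Type*} [CommSemiring R] (φ : ℕ →*₀ R) (p : ℕ)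

theorem sum_Icc_eq_sum_filter_not_dvd_add (N : ℕ) :
    ∑ n ∈ Icc 1 N, φ n = ∑ n ∈ Icc 1 N with ¬p ∣ n, φ n + φ p * ∑ m ∈ Icc 1 (N / p), φ m := by
  rw [← sum_filter_not_add_sum_filter (Icc 1 N) (p ∣ ·)]
  congr 1
  rcases eq_or_ne p 0 with rfl | hp
  · rw [map_zero, zero_mul]
    exact sum_eq_zero fun n hn => by simp at hn; omega
  rw [Nat.filter_dvd_Icc_one_eq_image hp, mul_sum,
    sum_image fun _ _ _ _ h => Nat.eq_of_mul_eq_mul_left (Nat.pos_of_ne_zero hp) h]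
  simp only [map_mul]

theorem sum_Icc_eq_sum_range_add (N K : ℕ) :
    ∑ n ∈ Icc 1 N, φ n = ∑ k ∈ range K, φ p ^ k * ∑ n ∈ Icc 1 (N / p ^ k) with ¬p ∣ n, φ n
      + φ p ^ K * ∑ n ∈ Icc 1 (N / p ^ K), φ n := by
  induction K with
  | zero => simp
  | succ K ih =>
    rw [ih, sum_Icc_eq_sum_filter_not_dvd_add φ p (N / p ^ K), Nat.div_div_eq_div_mul, ← pow_succ,
      sum_range_succ]
    ring

theorem sum_Icc_eq_sum_range_log {p : ℕ} (hp : 1 < p) (N : ℕ) :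
    ∑ n ∈ Icc 1 N, φ n =
      ∑ k ∈ range (Nat.log p N + 1), φ p ^ k * ∑ n ∈ Icc 1 (N / p ^ k) with ¬p ∣ n, φ n := by
  rw [sum_Icc_eq_sum_range_add φ p N (Nat.log p N + 1),
    Nat.div_eq_of_lt (Nat.lt_pow_succ_log_self hp N)]
  simp

end Semiring

theorem sum_Icc_eq_sum_range_log_updateAtPrime {R : Type*} [CommRing R] (φ : ℕ →*₀ R) {p : ℕ}
    (hp : p.Prime) (c : R) (N : ℕ) :
    ∑ n ∈ Icc 1 N, φ n = ∑ k ∈ range (Nat.log p N + 1), φ p ^ k *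
      (∑ n ∈ Icc 1 (N / p ^ k), φ.updateAtPrime p c n
        - c * ∑ n ∈ Icc 1 (N / p ^ k / p), φ.updateAtPrime p c n) := by
  rw [sum_Icc_eq_sum_range_log φ hp.one_lt]
  refine sum_congr rfl fun k _ => ?_
  rw [sum_Icc_eq_sum_filter_not_dvd_add (φ.updateAtPrime p c) p, φ.updateAtPrime_apply_self c hp,
    add_sub_cancel_right]
  congr 1
  exact sum_congr rfl fun n hn => (φ.updateAtPrime_apply_of_not_dvd c (mem_filter.1 hn).2).symm

theorem Asymptotics.IsBigO.exists_forall_le_of_monotone {E : Type*} [SeminormedAddGroup E]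
    {u : ℕ → E} {v : ℕ → ℝ} (h : u =O[atTop] v) (hv : Monotone v) (hv1 : ∀ᶠ N in atTop, 1 ≤ v N) :
    ∃ C, ∀ᶠ N in atTop, ∀ M ≤ N, ‖u M‖ ≤ C * v N := by
  obtain ⟨C, hC0, hC⟩ := h.exists_nonneg
  obtain ⟨M₀, hM₀⟩ := eventually_atTop.1 (hC.bound.and hv1)
  set B := ∑ M ∈ range M₀, ‖u M‖
  have hB : 0 ≤ B := sum_nonneg fun _ _ => norm_nonneg _
  refine ⟨C + B, eventually_atTop.2 ⟨M₀, fun N hN M hMN => ?_⟩⟩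
  have hvN : 1 ≤ v N := (hM₀ N hN).2
  rcases le_or_gt M₀ M with hM | hM
  · obtain ⟨huM, hvM⟩ := hM₀ M hM
    calc ‖u M‖ ≤ C * ‖v M‖ := huM
      _ = C * v M := by rw [Real.norm_of_nonneg (by linarith)]
      _ ≤ C * v N := mul_le_mul_of_nonneg_left (hv hMN) hC0
      _ ≤ (C + B) * v N := by nlinarith
  · calc ‖u M‖ ≤ B := single_le_sum (fun _ _ => norm_nonneg _) (mem_range.2 hM)
      _ ≤ B * v N := le_mul_of_one_le_right hB hvN
      _ ≤ (C + B) * v N := by nlinarith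

theorem Real.eventually_one_le_log_natCast : ∀ᶠ N : ℕ in atTop, 1 ≤ Real.log N :=
  (Real.tendsto_log_atTop.comp tendsto_natCast_atTop_atTop).eventually_ge_atTop 1

theorem Real.monotone_log_natCast_pow (s : ℕ) : Monotone fun N : ℕ => Real.log N ^ s := by
  intro a b hab
  refine pow_le_pow_left₀ (Real.log_natCast_nonneg a) ?_ s
  rcases Nat.eq_zero_or_pos a with rfl | ha
  · simpa using Real.log_natCast_nonneg b
  · exact Real.log_le_log (by exact_mod_cast ha) (by exact_mod_cast hab)

theorem isBigO_natLog_add_one (b : ℕ) :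
    (fun N : ℕ => (Nat.log b N : ℝ) + 1) =O[atTop] fun N => Real.log N := by
  refine IsBigO.of_bound ((Real.log b)⁻¹ + 1) ?_
  filter_upwards [Real.eventually_one_le_log_natCast] with N hN
  have h := Real.natLog_le_logb N b
  rw [Real.logb] at h
  rw [Real.norm_of_nonneg (by positivity), Real.norm_of_nonneg (by linarith)]
  calc (Nat.log b N : ℝ) + 1 ≤ Real.log N / Real.log b + Real.log N := by linarith
    _ = ((Real.log b)⁻¹ + 1) * Real.log N := by ring

theorem Asymptotics.IsBigO.comp_natFloor_log_pow {E : Type*} [Norm E] {u : ℕ → E} {s : ℕ}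
    (h : u =O[atTop] fun N : ℕ => Real.log N ^ s) :
    (fun x : ℝ => u ⌊x⌋₊) =O[atTop] fun x => Real.log x ^ s := by
  refine (h.comp_tendsto tendsto_nat_floor_atTop).trans (IsBigO.of_bound 1 ?_)
  filter_upwards [eventually_ge_atTop 1] with x hx
  have hfloor : (0 : ℝ) < ⌊x⌋₊ := by exact_mod_cast Nat.floor_pos.2 hx
  have hlog : 0 ≤ Real.log ⌊x⌋₊ := Real.log_natCast_nonneg _
  rw [Function.comp_apply, Real.norm_of_nonneg (by positivity),
    Real.norm_of_nonneg (pow_nonneg (Real.log_nonneg hx) s), one_mul]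
  exact pow_le_pow_left₀ hlog (Real.log_le_log hfloor (Nat.floor_le (by linarith))) s

theorem isBigO_sum_Icc_of_updateAtPrime {F : Type*} [NormedField F] (φ : ℕ →*₀ F) {p : ℕ}
    (hp : p.Prime) {c : F} (hc : ‖c‖ ≤ 1) (hφp : ‖φ p‖ ≤ 1) {s : ℕ}
    (h : (fun N : ℕ => ∑ n ∈ Icc 1 N, φ.updateAtPrime p c n) =O[atTop]
      fun N => Real.log N ^ s) :
    (fun N : ℕ => ∑ n ∈ Icc 1 N, φ n) =O[atTop] fun N => Real.log N ^ (s + 1) := by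
  obtain ⟨C, hC⟩ := h.exists_forall_le_of_monotone (Real.monotone_log_natCast_pow s)
    (Real.eventually_one_le_log_natCast.mono fun N hN => one_le_pow₀ hN)
  have hbound : ∀ᶠ N in atTop,
      ‖∑ n ∈ Icc 1 N, φ n‖ ≤ ((Nat.log p N : ℝ) + 1) * (2 * C * Real.log N ^ s) := by
    filter_upwards [hC] with N hN
    rw [sum_Icc_eq_sum_range_log_updateAtPrime φ hp c N]
    refine (norm_sum_le_of_le _ fun k _ => ?_).trans_eq (by simp :
      ∑ _k ∈ range (Nat.log p N + 1), 2 * C * Real.log N ^ s = _)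
    have hA := hN (N / p ^ k) (Nat.div_le_self _ _)
    have hB := hN (N / p ^ k / p) ((Nat.div_le_self _ _).trans (Nat.div_le_self _ _))
    calc _ ≤ 1 * (‖∑ n ∈ Icc 1 (N / p ^ k), φ.updateAtPrime p c n‖
          + 1 * ‖∑ n ∈ Icc 1 (N / p ^ k / p), φ.updateAtPrime p c n‖) := by
          rw [norm_mul, norm_pow]
          gcongr
          · exact pow_le_one₀ (norm_nonneg _) hφp
          · refine (norm_sub_le _ _).trans ?_
            rw [norm_mul]
            gcongr
      _ ≤ 2 * C * Real.log N ^ s := by linarith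
  calc (fun N : ℕ => ∑ n ∈ Icc 1 N, φ n)
      =O[atTop] fun N => ((Nat.log p N : ℝ) + 1) * (2 * C * Real.log N ^ s) :=
        .of_norm_eventuallyLE hbound
    _ =O[atTop] fun N => Real.log N * Real.log N ^ s :=
        (isBigO_natLog_add_one p).mul ((isBigO_refl _ _).const_mul_left _)
    _ = fun N : ℕ => Real.log N ^ (s + 1) := by simp only [pow_succ']

theorem ZMod.sum_range_natCast {M : Type*} [AddCommMonoid M] (q : ℕ) [NeZero q]
    (u : ZMod q → M) : ∑ n ∈ range q, u n = ∑ a, u a :=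
  sum_nbij' (↑) ZMod.val (fun _ _ => mem_univ _) (fun a _ => mem_range.2 a.val_lt)
    (fun _ hn => ZMod.val_natCast_of_lt (mem_range.1 hn)) (fun a _ => ZMod.natCast_zmod_val a)
    (fun _ _ => rfl)

namespace DirichletCharacter

variable {F : Type*} [NormedField F] {q : ℕ} [NeZero q] {χ : DirichletCharacter F q}

theorem sum_range_mul_eq_zero (hχ : χ ≠ 1) (k : ℕ) : ∑ n ∈ range (q * k), χ n = 0 := by
  induction k with
  | zero => simp
  | succ k ih =>
    rw [mul_add_one, sum_range_add, ih, zero_add]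
    simp only [Nat.cast_add, Nat.cast_mul, ZMod.natCast_self, zero_mul, zero_add]
    rw [ZMod.sum_range_natCast q χ]
    exact MulChar.sum_eq_zero_of_ne_one hχ

theorem norm_sum_range_le (hχ : χ ≠ 1) (N : ℕ) : ‖∑ n ∈ range N, χ n‖ ≤ q := by
  rw [← Nat.div_add_mod N q, sum_range_add, sum_range_mul_eq_zero hχ, zero_add]
  simp only [Nat.cast_add, Nat.cast_mul, ZMod.natCast_self, zero_mul, zero_add]
  calc ‖∑ i ∈ range (N % q), χ i‖ ≤ ∑ _i ∈ range (N % q), 1 :=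
        norm_sum_le_of_le _ fun i _ => χ.norm_le_one _
    _ ≤ q := by simpa using (Nat.mod_lt N (NeZero.pos q)).le

theorem isBigO_sum_Icc_one (hχ : χ ≠ 1) :
    (fun N : ℕ => ∑ n ∈ Icc 1 N, χ n) =O[atTop] fun _ => (1 : ℝ) := by
  refine IsBigO.of_bound (2 * q) (Eventually.of_forall fun N => ?_)
  rw [← Ico_add_one_right_eq_Icc, sum_Ico_eq_sub _ (by omega), norm_one, mul_one, two_mul]
  exact (norm_sub_le _ _).trans (add_le_add (norm_sum_range_le hχ _) (norm_sum_range_le hχ _))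

theorem isBigO_sum_Icc_log_pow_card (hχ : χ ≠ 1) (S : Finset ℕ) (hS : ∀ p ∈ S, p.Prime)
    (φ : ℕ →*₀ F) (hin : ∀ p ∈ S, ‖φ p‖ ≤ 1) (hout : ∀ p, p.Prime → p ∉ S → φ p = χ p) :
    (fun N : ℕ => ∑ n ∈ Icc 1 N, φ n) =O[atTop] fun N => Real.log N ^ S.card := by
  induction S using Finset.induction_on generalizing φ with
  | empty =>
    obtain rfl : φ = .ofPos (fun n => χ n) (by simp) fun m n _ _ => by simp :=
      MonoidWithZeroHom.ext_nat_prime fun p hp => by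
        rw [hout p hp (notMem_empty p), MonoidWithZeroHom.ofPos_apply _ _ hp.ne_zero]
    simpa only [MonoidWithZeroHom.sum_Icc_ofPos, card_empty, pow_zero] using
      χ.isBigO_sum_Icc_one hχ
  | insert p S hpS ih =>
    have hp := hS p (mem_insert_self p S)
    have hS' : ∀ r ∈ S, r.Prime := fun r hr => hS r (mem_insert_of_mem hr)
    rw [card_insert_of_notMem hpS]
    refine isBigO_sum_Icc_of_updateAtPrime φ hp (χ.norm_le_one p) (hin p (mem_insert_self p S))
      (ih hS' _ (fun r hr => ?_) (fun r hr hrS => ?_))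
    · rw [φ.updateAtPrime_apply_prime_of_ne _ hp (hS' r hr) (ne_of_mem_of_not_mem hr hpS)]
      exact hin r (mem_insert_of_mem hr)
    · rcases eq_or_ne r p with rfl | hrp
      · exact φ.updateAtPrime_apply_self _ hp
      · rw [φ.updateAtPrime_apply_prime_of_ne _ hp hr hrp]
        exact hout r hr (by simp [hrp, hrS])

end DirichletCharacter

theorem stmt5 (q : ℕ) [NeZero q] (χ : DirichletCharacter ℂ q) (hχ : χ ≠ 1)
    (S : Finset ℕ) (hS : ∀ p ∈ S, p.Prime)
    (f : ℕ → ℂ) (hf1 : f 1 = 1) (hmul : ∀ m n : ℕ, f (m * n) = f m * f n)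
    (hin : ∀ p ∈ S, ‖f p‖ ≤ 1)
    (hout : ∀ p : ℕ, p.Prime → p ∉ S → f p = χ (p : ZMod q)) :
    (fun x : ℝ => ∑ n ∈ Finset.Icc 1 ⌊x⌋₊, f n) =O[atTop]
      fun x : ℝ => (Real.log x) ^ S.card := by
  set φ := MonoidWithZeroHom.ofPos f hf1 fun m n _ _ => hmul m n
  have hφ : ∀ n, n ≠ 0 → φ n = f n := fun n hn => MonoidWithZeroHom.ofPos_apply _ _ hn
  have key := χ.isBigO_sum_Icc_log_pow_card hχ S hS φ
    (fun p hp => by rw [hφ p (hS p hp).ne_zero]; exact hin p hp)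
    (fun p hp hpS => by rw [hφ p hp.ne_zero]; exact hout p hp hpS)
  simpa only [φ, MonoidWithZeroHom.sum_Icc_ofPos] using key.comp_natFloor_log_pow
end

section
/- Let α be irrational and suppose there are constants μ ≥ 1, C > 0, B₀ ≥ 1 such that |α - a/b| ≥ C/b^{μ+1} for all integers a and all integers b ≥ B₀. Then for every integer k ≥ μ + 2, the series ∑_{n=1}^∞ n^{-k} |1 - e^{2πi n α}|^{-1} converges. -/
/-!
Since `|1 - e^{2πix}| = 2|sin πx| ≥ 4 |x - round x|`, and the Diophantine hypothesis with
`a = round (nα)`, `b = n` gives `|nα - round (nα)| ≥ C / n^μ`, the `n`-th term is at most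
`n^μ / (4C n^k) ≤ 1 / (4C n²)` for large `n`; compare with `∑ 1/n²`.
-/

open Real

lemma norm_one_sub_exp_two_pi_I_mul (x : ℝ) :
    ‖(1 : ℂ) - Complex.exp (2 * π * Complex.I * x)‖ = 2 * |sin (π * x)| := by
  rw [norm_sub_rev,
    show 2 * π * Complex.I * x = Complex.I * ((2 * π * x : ℝ) : ℂ) by push_cast; ring,
    Complex.norm_exp_I_mul_ofReal_sub_one, Real.norm_eq_abs, abs_mul, abs_two]
  ring_nf

lemma abs_sin_pi_mul_sub_round (x : ℝ) : |sin (π * (x - round x))| = |sin (π * x)| := by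
  rw [mul_sub, mul_comm π ((round x : ℤ) : ℝ), sin_sub_int_mul_pi, abs_mul, abs_neg_one_zpow,
    one_mul]

lemma four_mul_abs_sub_round_le_norm_one_sub_exp (x : ℝ) :
    4 * |x - round x| ≤ ‖(1 : ℂ) - Complex.exp (2 * π * Complex.I * x)‖ := by
  have hπ : |π * (x - round x)| = π * |x - round x| := by rw [abs_mul, abs_of_pos pi_pos]
  have hsin : 2 / π * |π * (x - round x)| ≤ |sin (π * (x - round x))| :=
    mul_abs_le_abs_sin (by rw [hπ]; nlinarith [abs_sub_round x, pi_pos])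
  rw [hπ, ← mul_assoc, div_mul_cancel₀ _ pi_ne_zero, abs_sin_pi_mul_sub_round] at hsin
  rw [norm_one_sub_exp_two_pi_I_mul]
  linarith

lemma div_rpow_le_abs_mul_sub_round {α μ C : ℝ} {B₀ : ℕ}
    (h : ∀ a : ℤ, ∀ b : ℕ, B₀ ≤ b → C / (b : ℝ) ^ (μ + 1) ≤ |α - (a : ℝ) / b|)
    {n : ℕ} (hn₀ : 0 < n) (hn : B₀ ≤ n) :
    C / (n : ℝ) ^ μ ≤ |n * α - round (n * α)| := by
  have hn' : (0 : ℝ) < n := Nat.cast_pos.mpr hn₀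
  have happrox := h (round (n * α)) n hn
  rw [rpow_add_one hn'.ne', ← div_div,
    show α - (round (n * α) : ℝ) / n = (n * α - round (n * α)) / n by field_simp,
    abs_div, abs_of_pos hn'] at happrox
  exact (div_le_div_iff_of_pos_right hn').mp happrox

lemma one_div_pow_mul_le {x y c μ : ℝ} {k : ℕ} (hx : 1 ≤ x) (hc : 0 < c) (hk : μ + 2 ≤ k)
    (hy : c / x ^ μ ≤ y) :
    1 / (x ^ k * y) ≤ c⁻¹ * (1 / x ^ 2) := by
  have hx₀ : 0 < x := one_pos.trans_le hx
  have hpow : x ^ μ * x ^ 2 ≤ x ^ k := by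
    rw [← rpow_two, ← rpow_natCast x k, ← rpow_add hx₀]
    exact rpow_le_rpow_of_exponent_le hx hk
  have hxk : c * x ^ 2 ≤ x ^ k * y := calc
    c * x ^ 2 = c / x ^ μ * (x ^ μ * x ^ 2) := by field_simp
    _ ≤ y * x ^ k := by gcongr; exact (div_pos hc (rpow_pos_of_pos hx₀ μ)).le.trans hy
    _ = x ^ k * y := mul_comm _ _
  rw [← one_div, one_div_mul_one_div]
  exact one_div_le_one_div_of_le (by positivity) hxk

theorem stmt13_general (α : ℝ) (μ C : ℝ) (hC : 0 < C)
    (B₀ : ℕ)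
    (h : ∀ a : ℤ, ∀ b : ℕ, B₀ ≤ b → C / (b : ℝ) ^ (μ + 1) ≤ |α - (a : ℝ) / b|)
    (k : ℕ) (hk : μ + 2 ≤ (k : ℝ)) :
    Summable (fun n : ℕ =>
      1 / ((n : ℝ) ^ k * ‖(1 : ℂ) - Complex.exp (2 * Real.pi * Complex.I * n * α)‖)) := by
  have hcomparison : Summable fun n : ℕ => (4 * C)⁻¹ * (1 / (n : ℝ) ^ 2) :=
    (summable_one_div_nat_pow.mpr one_lt_two).mul_left _
  refine hcomparison.of_norm_bounded_eventually_nat ?_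
  filter_upwards [Filter.eventually_ge_atTop (max B₀ 1)] with n hn
  have hn₀ : 0 < n := lt_of_lt_of_le one_pos (le_of_max_le_right hn)
  have hlower : 4 * C / (n : ℝ) ^ μ ≤
      ‖(1 : ℂ) - Complex.exp (2 * Real.pi * Complex.I * n * α)‖ := calc
    4 * C / (n : ℝ) ^ μ = 4 * (C / (n : ℝ) ^ μ) := mul_div_assoc _ _ _
    _ ≤ 4 * |n * α - round (n * α)| := by
      gcongr; exact div_rpow_le_abs_mul_sub_round h hn₀ (le_of_max_le_left hn)
    _ ≤ _ := by
      simpa [mul_assoc] using four_mul_abs_sub_round_le_norm_one_sub_exp (n * α)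
  rw [Real.norm_of_nonneg (by positivity)]
  exact one_div_pow_mul_le (by exact_mod_cast hn₀) (by positivity) hk hlower

theorem stmt13 (α : ℝ) (hα : Irrational α) (μ C : ℝ) (hμ : 1 ≤ μ) (hC : 0 < C)
    (B₀ : ℕ) (hB₀ : 1 ≤ B₀)
    (h : ∀ a : ℤ, ∀ b : ℕ, B₀ ≤ b → C / (b : ℝ) ^ (μ + 1) ≤ |α - (a : ℝ) / b|)
    (k : ℕ) (hk : μ + 2 ≤ (k : ℝ)) :
    Summable (fun n : ℕ =>
      1 / ((n : ℝ) ^ k * ‖(1 : ℂ) - Complex.exp (2 * Real.pi * Complex.I * n * α)‖)) :=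
  stmt13_general α μ C hC B₀ h k hk
end

section
/- Let a : ℕ → ℂ with ∑_{n ≤ x} a(n) ~ (log x)^N as x → ∞ for some integer N ≥ 0, and let k ≥ 1 be an integer. Then the Riesz mean R_k(x) = (1/k!) ∑_{n ≤ x} a(n) (log(x/n))^k satisfies R_k(x) ~ (N! / (N+k)!) (log x)^{N+k} as x → ∞. -/
/-!
Substitute `x = exp y`. Since `(y - log n) ^ (j + 1) / (j + 1)` is the integral of
`(u - log n) ^ j` over `[log n, y]`, the Riesz means satisfy
`R_{j+1}(exp y) = ∫₀ʸ R_j(exp u) du`. Integration preserves asymptotics against a positive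
power, `F(u) ~ c u^M ⟹ ∫₀ʸ F ~ c y^{M+1} / (M + 1)`, because the error `o(u^M)` integrates to
`o(y^{M+1})`. Induction on `k`, starting from `R_0(exp y) ~ y^N`, gives the claim.
-/

open Filter Topology MeasureTheory Set Asymptotics

theorem Asymptotics.IsLittleO.intervalIntegral_atTop {E : Type*} [NormedAddCommGroup E]
    [NormedSpace ℝ E] {f : ℝ → E} {g : ℝ → ℝ} {a : ℝ}
    (hf : ∀ x, IntervalIntegrable f volume a x) (hg : ∀ x, IntervalIntegrable g volume a x)
    (hg_nonneg : ∀ᶠ t in atTop, 0 ≤ g t)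
    (hg_int : Tendsto (fun x => ∫ t in a..x, g t) atTop atTop) (h : f =o[atTop] g) :
    (fun x => ∫ t in a..x, f t) =o[atTop] fun x => ∫ t in a..x, g t := by
  set G := fun x => ∫ t in a..x, g t
  refine isLittleO_iff.2 fun ε hε => ?_
  obtain ⟨T, hT⟩ := eventually_atTop.1 ((h.def (half_pos hε)).and hg_nonneg)
  have tail : ∀ x ≥ T, ‖∫ t in T..x, f t‖ ≤ ε / 2 * (G x - G T) := by
    intro x hx
    have hgT : IntervalIntegrable g volume T x := (hg T).symm.trans (hg x)
    calc ‖∫ t in T..x, f t‖ ≤ ∫ t in T..x, ε / 2 * g t :=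
          intervalIntegral.norm_integral_le_of_norm_le hx
            (ae_of_all _ fun t ht => by
              simpa [abs_of_nonneg (hT t ht.1.le).2] using (hT t ht.1.le).1)
            (hgT.const_mul _)
      _ = ε / 2 * (G x - G T) := by
          rw [intervalIntegral.integral_const_mul,
            intervalIntegral.integral_interval_sub_left (hg x) (hg T)]
  filter_upwards [eventually_ge_atTop T, hg_int.eventually_ge_atTop 0,
    (hg_int.const_mul_atTop (half_pos hε)).eventually_ge_atTop
      (‖∫ t in a..T, f t‖ - ε / 2 * G T)] with x hxT hGx hεGx
  rw [← intervalIntegral.integral_add_adjacent_intervals (hf T) ((hf T).symm.trans (hf x)),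
    Real.norm_of_nonneg hGx]
  linarith [norm_add_le (∫ t in a..T, f t) (∫ t in T..x, f t), tail x hxT]

theorem Asymptotics.IsEquivalent.intervalIntegral_atTop {F : ℝ → ℂ} {g : ℝ → ℝ} {a : ℝ}
    (hF : ∀ x, IntervalIntegrable F volume a x) (hg : ∀ x, IntervalIntegrable g volume a x)
    (hg_nonneg : ∀ᶠ t in atTop, 0 ≤ g t)
    (hg_int : Tendsto (fun x => ∫ t in a..x, g t) atTop atTop)
    (h : F ~[atTop] fun t => (g t : ℂ)) :
    (fun x => ∫ t in a..x, F t) ~[atTop] fun x => ((∫ t in a..x, g t : ℝ) : ℂ) := by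
  have hg' : ∀ x, IntervalIntegrable (fun t => (g t : ℂ)) volume a x := fun x =>
    ⟨(hg x).1.ofReal, (hg x).2.ofReal⟩
  have := (Complex.isLittleO_ofReal_right.1 h).intervalIntegral_atTop
    (fun x => (hF x).sub (hg' x)) hg hg_nonneg hg_int
  refine Complex.isLittleO_ofReal_right.2 (this.congr_left fun x => ?_)
  rw [intervalIntegral.integral_sub (hF x) (hg' x), intervalIntegral.integral_ofReal]
  rfl

theorem Asymptotics.IsEquivalent.intervalIntegral_const_mul_pow {F : ℝ → ℂ} {c : ℝ} (hc : 0 < c)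
    (M : ℕ) (hF : ∀ x, IntervalIntegrable F volume 0 x)
    (h : F ~[atTop] fun u => ((c * u ^ M : ℝ) : ℂ)) :
    (fun y => ∫ u in (0 : ℝ)..y, F u) ~[atTop]
      fun y => ((c * (y ^ (M + 1) / (M + 1)) : ℝ) : ℂ) := by
  have hint : ∀ y : ℝ, ∫ u in (0 : ℝ)..y, c * u ^ M = c * (y ^ (M + 1) / (M + 1)) := fun y => by
    simp [intervalIntegral.integral_const_mul, integral_pow]
  have hint_tendsto : Tendsto (fun y => ∫ u in (0 : ℝ)..y, c * u ^ M) atTop atTop := by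
    simp only [hint]
    exact ((tendsto_pow_atTop M.succ_ne_zero).atTop_div_const (by positivity)).const_mul_atTop hc
  simpa only [hint] using h.intervalIntegral_atTop hF
    (fun x => (intervalIntegral.intervalIntegrable_pow M).const_mul c)
    (eventually_ge_atTop 0 |>.mono fun u hu => by positivity) hint_tendsto

theorem integral_indicator_Ici_sub_pow (j : ℕ) {a c y : ℝ} (hac : a ≤ c) (hcy : c ≤ y) :
    ∫ u in a..y, (Ici c).indicator (fun u => (u - c) ^ j) u = (y - c) ^ (j + 1) / (j + 1) := by
  rw [intervalIntegral.integral_of_le (hac.trans hcy), setIntegral_indicator measurableSet_Ici,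
    setIntegral_congr_set ((ae_eq_refl _).inter Ioi_ae_eq_Ici.symm), Ioc_inter_Ioi,
    max_eq_right hac, ← intervalIntegral.integral_of_le hcy,
    intervalIntegral.integral_comp_sub_right (fun u => u ^ j), integral_pow, sub_self]
  simp

theorem intervalIntegrable_ofReal_indicator_Ici_sub_pow (j : ℕ) (c a b : ℝ) :
    IntervalIntegrable (fun u => (((Ici c).indicator (fun u => (u - c) ^ j) u : ℝ) : ℂ))
      volume a b :=
  intervalIntegrable_iff.2 <| Integrable.ofReal <|
    (((continuous_sub_right c).pow j).integrableOn_uIoc).indicator measurableSet_Ici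

noncomputable def rieszMean (a : ℕ → ℂ) (k : ℕ) (x : ℝ) : ℂ :=
  (k.factorial : ℂ)⁻¹ * ∑ n ∈ Finset.Icc 1 ⌊x⌋₊, a n * ((Real.log (x / n) ^ k : ℝ) : ℂ)

theorem rieszMean_exp_eq_sum_indicator (a : ℕ → ℂ) (j : ℕ) {u y : ℝ} (huy : u ≤ y) :
    rieszMean a j (Real.exp u) = (j.factorial : ℂ)⁻¹ * ∑ n ∈ Finset.Icc 1 ⌊Real.exp y⌋₊,
      a n * (((Ici (Real.log n)).indicator (fun u => (u - Real.log n) ^ j) u : ℝ) : ℂ) := by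
  have mem_iff : ∀ n ≥ 1, n ≤ ⌊Real.exp u⌋₊ ↔ Real.log n ≤ u := fun n hn => by
    rw [Nat.le_floor_iff (Real.exp_pos u).le, Real.log_le_iff_le_exp (by exact_mod_cast hn)]
  rw [rieszMean, ← Finset.sum_subset (Finset.Icc_subset_Icc_right
    (Nat.floor_mono (Real.exp_le_exp.2 huy)))]
  · congr 1
    refine Finset.sum_congr rfl fun n hn => ?_
    obtain ⟨hn1, hnu⟩ := Finset.mem_Icc.1 hn
    rw [indicator_of_mem (show u ∈ Ici (Real.log n) from ((mem_iff n hn1).1 hnu)),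
      Real.log_div (Real.exp_pos u).ne' (by positivity), Real.log_exp]
  · intro n hn hnu
    obtain ⟨hn1, -⟩ := Finset.mem_Icc.1 hn
    rw [indicator_of_notMem (s := Ici (Real.log n))
      (fun h => hnu (Finset.mem_Icc.2 ⟨hn1, (mem_iff n hn1).2 h⟩)),
      Complex.ofReal_zero, mul_zero]

theorem rieszMean_succ_exp (a : ℕ → ℂ) (j : ℕ) {y : ℝ} (hy : 0 ≤ y) :
    rieszMean a (j + 1) (Real.exp y) = ∫ u in (0 : ℝ)..y, rieszMean a j (Real.exp u) := by
  rw [intervalIntegral.integral_congr fun u hu => rieszMean_exp_eq_sum_indicator a j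
      (y := y) (by rw [uIcc_of_le hy] at hu; exact hu.2),
    intervalIntegral.integral_const_mul,
    intervalIntegral.integral_finsetSum fun n _ =>
      (intervalIntegrable_ofReal_indicator_Ici_sub_pow j _ 0 y).const_mul (a n),
    rieszMean, Finset.mul_sum, Finset.mul_sum]
  refine Finset.sum_congr rfl fun n hn => ?_
  obtain ⟨hn1, hny⟩ := Finset.mem_Icc.1 hn
  have hlog_nonneg : 0 ≤ Real.log n := Real.log_nonneg (by exact_mod_cast hn1)
  have hlog_le : Real.log n ≤ y := by
    rw [Real.log_le_iff_le_exp (by exact_mod_cast hn1)]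
    exact (Nat.le_floor_iff (Real.exp_pos y).le).1 hny
  rw [intervalIntegral.integral_const_mul, intervalIntegral.integral_ofReal,
    integral_indicator_Ici_sub_pow j hlog_nonneg hlog_le,
    Real.log_div (Real.exp_pos y).ne' (by positivity), Real.log_exp, Nat.factorial_succ]
  push_cast
  field_simp

theorem intervalIntegrable_rieszMean_exp (a : ℕ → ℂ) (j : ℕ) (x : ℝ) :
    IntervalIntegrable (fun u => rieszMean a j (Real.exp u)) volume 0 x := by
  have hsum := IntervalIntegrable.sum (Finset.Icc 1 ⌊Real.exp (max 0 x)⌋₊) fun n _ =>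
    (intervalIntegrable_ofReal_indicator_Ici_sub_pow j (Real.log n) 0 x).const_mul (a n)
  rw [Finset.sum_fn] at hsum
  refine (intervalIntegrable_congr fun u hu => ?_).2 (hsum.const_mul (j.factorial : ℂ)⁻¹)
  exact rieszMean_exp_eq_sum_indicator a j (mem_Ioc.1 hu).2

theorem rieszMean_exp_isEquivalent (a : ℕ → ℂ) (N : ℕ)
    (h0 : (fun y => rieszMean a 0 (Real.exp y)) ~[atTop] fun y => ((y ^ N : ℝ) : ℂ)) (j : ℕ) :
    (fun y => rieszMean a j (Real.exp y)) ~[atTop]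
      fun y => (((N.factorial : ℝ) / (N + j).factorial * y ^ (N + j) : ℝ) : ℂ) := by
  induction j with
  | zero =>
    have : (N.factorial : ℝ) ≠ 0 := by positivity
    simpa [this] using h0
  | succ j ih =>
    refine ((ih.intervalIntegral_const_mul_pow (by positivity) (N + j)
      (intervalIntegrable_rieszMean_exp a j)).congr_left ?_).congr_right ?_
    · filter_upwards [eventually_ge_atTop 0] with y hy
      exact (rieszMean_succ_exp a j hy).symm
    · refine Eventually.of_forall fun y => ?_
      rw [← add_assoc, Nat.factorial_succ]
      push_cast
      field_simp

theorem stmt14_general (a : ℕ → ℂ) (N : ℕ)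
    (h : Tendsto (fun x : ℝ =>
        (∑ n ∈ Finset.Icc 1 ⌊x⌋₊, a n) / ((Real.log x ^ N : ℝ) : ℂ))
      atTop (𝓝 1))
    (k : ℕ) :
    Tendsto (fun x : ℝ =>
        ((k.factorial : ℂ)⁻¹ * ∑ n ∈ Finset.Icc 1 ⌊x⌋₊,
            a n * ((Real.log (x / n) ^ k : ℝ) : ℂ)) /
          (((N.factorial : ℂ) / ((N + k).factorial : ℂ)) * ((Real.log x ^ (N + k) : ℝ) : ℂ)))
      atTop (𝓝 1) := by
  have h0 : (fun y => rieszMean a 0 (Real.exp y)) ~[atTop] fun y => ((y ^ N : ℝ) : ℂ) :=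
    isEquivalent_of_tendsto_one <| by
      simpa [rieszMean, Real.log_exp, Pi.div_def] using Real.tendsto_comp_exp_atTop.2 h
  have hne : ∀ᶠ y : ℝ in atTop,
      (((N.factorial : ℝ) / (N + k).factorial * y ^ (N + k) : ℝ) : ℂ) ≠ 0 := by
    filter_upwards [eventually_gt_atTop 0] with y hy
    exact Complex.ofReal_ne_zero.2 (by positivity)
  have hk := (isEquivalent_iff_tendsto_one hne).1 (rieszMean_exp_isEquivalent a N h0 k)
  refine (hk.comp Real.tendsto_log_atTop).congr' ?_
  filter_upwards [eventually_gt_atTop 0] with x hx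
  simp [rieszMean, Real.exp_log hx]

theorem stmt14 (a : ℕ → ℂ) (N : ℕ)
    (h : Tendsto (fun x : ℝ =>
        (∑ n ∈ Finset.Icc 1 ⌊x⌋₊, a n) / ((Real.log x ^ N : ℝ) : ℂ))
      atTop (𝓝 1))
    (k : ℕ) (hk : 1 ≤ k) :
    Tendsto (fun x : ℝ =>
        ((k.factorial : ℂ)⁻¹ * ∑ n ∈ Finset.Icc 1 ⌊x⌋₊,
            a n * ((Real.log (x / n) ^ k : ℝ) : ℂ)) /
          (((N.factorial : ℂ) / ((N + k).factorial : ℂ)) * ((Real.log x ^ (N + k) : ℝ) : ℂ)))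
      atTop (𝓝 1) :=
  stmt14_general a N h k
end

section
/- Let F(s) be a function holomorphic on Re(s) > 0 with |F(σ)| ≫ σ^{-N} as σ → 0⁺ for some integer N ≥ 1, and suppose F(s) = s ∫₁^∞ A(x) x^{-1-s} dx for all Re(s) > 0, where A : [1, ∞) → ℂ is locally integrable with A(x) = O((log x)^N). Then A(x) = Ω((log x)^N), i.e. limsup_{x→∞} |A(x)|/(log x)^N > 0. -/
/-!
Suppose the limsup vanishes, i.e. `A = o((log x)^N)`. Split the integral at a point `X` beyond
which `‖A x‖ ≤ ε (log x)^N`: the part over `(1, X]` is bounded independently of `σ`, while the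
tail is at most `ε ∫₁^∞ (log x)^N x^{-1-σ} dx = ε Γ(N+1) / σ^{N+1}`. Hence
`σ^N ‖F σ‖ = σ^{N+1} ‖∫₁^∞ A x x^{-1-σ} dx‖ → 0` as `σ → 0⁺`, contradicting `|F(σ)| ≫ σ^{-N}`.
-/

open Filter Asymptotics MeasureTheory Real Set Topology

lemma exp_mul_log_pow_mul_rpow_exp (N : ℕ) (σ t : ℝ) :
    exp t * (log (exp t) ^ N * exp t ^ (-1 - σ)) = t ^ (N : ℝ) * exp (-(σ * t)) := by
  rw [log_exp, rpow_natCast, ← exp_mul, mul_left_comm, ← exp_add]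
  ring_nf

lemma Ioi_one_eq_image_exp : Ioi (1 : ℝ) = exp '' Ioi 0 := by
  rw [image_exp_Ioi, exp_zero]

lemma integrableOn_log_pow_mul_rpow (N : ℕ) {σ : ℝ} (hσ : 0 < σ) :
    IntegrableOn (fun x ↦ log x ^ N * x ^ (-1 - σ)) (Ioi 1) := by
  rw [Ioi_one_eq_image_exp, integrableOn_image_iff_integrableOn_abs_deriv_smul
    measurableSet_Ioi (fun t _ ↦ (hasDerivAt_exp t).hasDerivWithinAt) exp_injective.injOn]
  simp only [abs_exp, smul_eq_mul, exp_mul_log_pow_mul_rpow_exp]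
  simpa only [rpow_one, neg_mul] using integrableOn_rpow_mul_exp_neg_mul_rpow
    (neg_one_lt_zero.trans_le N.cast_nonneg) one_pos hσ

lemma integral_log_pow_mul_rpow (N : ℕ) {σ : ℝ} (hσ : 0 < σ) :
    ∫ x in Ioi 1, log x ^ N * x ^ (-1 - σ) = Gamma (N + 1) / σ ^ (N + 1) := by
  rw [Ioi_one_eq_image_exp, integral_image_eq_integral_abs_deriv_smul
    measurableSet_Ioi (fun t _ ↦ (hasDerivAt_exp t).hasDerivWithinAt) exp_injective.injOn]
  simp only [abs_exp, smul_eq_mul, exp_mul_log_pow_mul_rpow_exp]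
  have := integral_rpow_mul_exp_neg_mul_Ioi (a := N + 1) (by positivity) hσ
  rw [add_sub_cancel_right] at this
  rw [this, ← Nat.cast_add_one, rpow_natCast, one_div_pow, one_div_mul_eq_div]

lemma norm_integral_mul_cpow_le {A : ℝ → ℂ} {N : ℕ} {X ε σ : ℝ} (hA : IntegrableOn A (Ioc 1 X))
    (hε : 0 ≤ ε) (hbound : ∀ x, X < x → ‖A x‖ ≤ ε * log x ^ N) (hσ : 0 < σ) :
    ‖∫ x in Ioi 1, A x * (x : ℂ) ^ (-1 - (σ : ℂ))‖ ≤
      (∫ x in Ioc 1 X, ‖A x‖) + ε * (Gamma (N + 1) / σ ^ (N + 1)) := by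
  have hmajorant : ∀ x ∈ Ioi (1 : ℝ), ‖A x * (x : ℂ) ^ (-1 - (σ : ℂ))‖ ≤
      (Ioc 1 X).indicator (‖A ·‖) x + ε * (log x ^ N * x ^ (-1 - σ)) := by
    intro x (hx : 1 < x)
    have hrpow : x ^ (-1 - σ) ≤ 1 := rpow_le_one_of_one_le_of_nonpos hx.le (by linarith)
    have hlog : 0 ≤ log x ^ N * x ^ (-1 - σ) := by have := log_nonneg hx.le; positivity
    rw [norm_mul, Complex.norm_cpow_eq_rpow_re_of_pos (by linarith)]
    simp only [Complex.sub_re, Complex.neg_re, Complex.one_re, Complex.ofReal_re]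
    by_cases hxX : x ≤ X
    · rw [indicator_of_mem (show x ∈ Ioc 1 X from ⟨hx, hxX⟩)]
      nlinarith [norm_nonneg (A x)]
    · rw [indicator_of_notMem fun h ↦ hxX h.2, zero_add, ← mul_assoc]
      exact mul_le_mul_of_nonneg_right (hbound x (not_le.1 hxX)) (by positivity)
  have hint₁ : IntegrableOn ((Ioc 1 X).indicator (‖A ·‖)) (Ioi 1) :=
    (IntegrableOn.integrable_indicator (f := (‖A ·‖)) hA.norm measurableSet_Ioc).integrableOn
  have hint₂ : IntegrableOn (fun x ↦ ε * (log x ^ N * x ^ (-1 - σ))) (Ioi 1) :=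
    (integrableOn_log_pow_mul_rpow N hσ).const_mul ε
  calc ‖∫ x in Ioi 1, A x * (x : ℂ) ^ (-1 - (σ : ℂ))‖
      ≤ ∫ x in Ioi 1, ‖A x * (x : ℂ) ^ (-1 - (σ : ℂ))‖ := norm_integral_le_integral_norm _
    _ ≤ ∫ x in Ioi 1, ((Ioc 1 X).indicator (‖A ·‖) x + ε * (log x ^ N * x ^ (-1 - σ))) :=
      integral_mono_of_nonneg (.of_forall fun _ ↦ norm_nonneg _) (hint₁.add hint₂)
        ((ae_restrict_iff' measurableSet_Ioi).2 (.of_forall hmajorant))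
    _ = (∫ x in Ioc 1 X, ‖A x‖) + ε * (Gamma (N + 1) / σ ^ (N + 1)) := by
      rw [integral_add hint₁ hint₂, setIntegral_indicator measurableSet_Ioc,
        inter_eq_right.2 Ioc_subset_Ioi_self, integral_const_mul, integral_log_pow_mul_rpow N hσ]

lemma Asymptotics.IsBigO.isLittleO_of_limsup_le_zero {α E : Type*} [Norm E] {l : Filter α}
    {f : α → E} {g : α → ℝ} (hfg : f =O[l] g) (hg : ∀ᶠ x in l, 0 < g x)
    (h : limsup (fun x ↦ ‖f x‖ / g x) l ≤ 0) : f =o[l] g := by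
  obtain ⟨C, hC⟩ := hfg.bound
  have hbdd : IsBoundedUnder (· ≤ ·) l fun x ↦ ‖f x‖ / g x := by
    refine isBoundedUnder_of_eventually_le (a := C) ?_
    filter_upwards [hC, hg] with x hx hgx
    rwa [div_le_iff₀ hgx, ← norm_of_nonneg hgx.le]
  refine isLittleO_iff.2 fun ε hε ↦ ?_
  filter_upwards [eventually_lt_of_limsup_lt (h.trans_lt hε) hbdd, hg] with x hx hgx
  rw [div_lt_iff₀ hgx] at hx
  rw [norm_of_nonneg hgx.le]
  exact hx.le

lemma tendsto_pow_mul_norm_integral_mul_cpow {A : ℝ → ℂ} {N : ℕ}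
    (hloc : LocallyIntegrableOn A (Ici 1)) (hA : A =o[atTop] fun x ↦ log x ^ N) :
    Tendsto (fun σ : ℝ ↦ σ ^ (N + 1) * ‖∫ x in Ioi 1, A x * (x : ℂ) ^ (-1 - (σ : ℂ))‖)
      (𝓝[>] 0) (𝓝 0) := by
  have hΓ : 0 < Gamma (N + 1) := Gamma_pos_of_pos (by positivity)
  refine tendsto_order.2 ⟨fun a ha ↦ ?_, fun δ hδ ↦ ?_⟩
  · filter_upwards [self_mem_nhdsWithin] with σ (hσ : 0 < σ) using ha.trans_le (by positivity)
  set ε := δ / 2 / Gamma (N + 1) with hε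
  obtain ⟨X₀, hX₀⟩ := eventually_atTop.1 (hA.bound (div_pos (half_pos hδ) hΓ))
  set X := max X₀ 1
  have hbound : ∀ x, X < x → ‖A x‖ ≤ ε * log x ^ N := fun x hx ↦ by
    have := hX₀ x ((le_max_left _ _).trans hx.le)
    rwa [norm_pow, norm_of_nonneg (log_nonneg ((le_max_right _ _).trans hx.le))] at this
  have hAint : IntegrableOn A (Ioc 1 X) :=
    (hloc.integrableOn_compact_subset Icc_subset_Ici_self isCompact_Icc).mono_set
      Ioc_subset_Icc_self
  set M := ∫ x in Ioc 1 X, ‖A x‖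
  have hM : Tendsto (fun σ : ℝ ↦ σ ^ (N + 1) * M) (𝓝[>] 0) (𝓝 0) :=
    (Continuous.tendsto' (by fun_prop) 0 0 (by simp)).mono_left nhdsWithin_le_nhds
  filter_upwards [self_mem_nhdsWithin, hM.eventually (gt_mem_nhds (half_pos hδ))]
    with σ (hσ : 0 < σ) hσM
  calc σ ^ (N + 1) * ‖∫ x in Ioi 1, A x * (x : ℂ) ^ (-1 - (σ : ℂ))‖
      ≤ σ ^ (N + 1) * (M + ε * (Gamma (N + 1) / σ ^ (N + 1))) :=
        mul_le_mul_of_nonneg_left (norm_integral_mul_cpow_le hAint (by positivity) hbound hσ)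
          (by positivity)
    _ = σ ^ (N + 1) * M + δ / 2 := by rw [hε]; field_simp
    _ < δ := by linarith

theorem stmt17_general (F : ℂ → ℂ) (N : ℕ)
    (hlow : ∃ c : ℝ, 0 < c ∧ ∃ σ₀ : ℝ, 0 < σ₀ ∧
      ∀ σ : ℝ, 0 < σ → σ < σ₀ → c / σ ^ N ≤ ‖F σ‖)
    (A : ℝ → ℂ) (hloc : LocallyIntegrableOn A (Set.Ici 1))
    (hA : A =O[atTop] fun x : ℝ => (Real.log x) ^ N)
    (hrepr : ∀ s : ℂ, 0 < s.re →
      F s = s * ∫ x in Set.Ioi (1 : ℝ), A x * (x : ℂ) ^ (-1 - s)) :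
    0 < Filter.limsup (fun x : ℝ => ‖A x‖ / (Real.log x) ^ N) atTop := by
  obtain ⟨c, hc, σ₀, hσ₀, hlow⟩ := hlow
  by_contra! hL
  have hlog : ∀ᶠ x in atTop, 0 < log x ^ N :=
    (tendsto_log_atTop.eventually_gt_atTop 0).mono fun x hx ↦ pow_pos hx N
  have hc_le : ∀ᶠ σ : ℝ in 𝓝[>] 0,
      c ≤ σ ^ (N + 1) * ‖∫ x in Ioi 1, A x * (x : ℂ) ^ (-1 - (σ : ℂ))‖ := by
    filter_upwards [Ioo_mem_nhdsGT hσ₀] with σ ⟨hσ, hσσ₀⟩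
    have := hlow σ hσ hσσ₀
    rw [hrepr σ (by simpa), norm_mul, Complex.norm_real, norm_of_nonneg hσ.le,
      div_le_iff₀ (by positivity)] at this
    exact this.trans_eq (by ring)
  exact hc.not_ge <| ge_of_tendsto
    (tendsto_pow_mul_norm_integral_mul_cpow hloc (hA.isLittleO_of_limsup_le_zero hlog hL)) hc_le

theorem stmt17 (F : ℂ → ℂ) (N : ℕ) (hN : 1 ≤ N)
    (hF : DifferentiableOn ℂ F {s : ℂ | 0 < s.re})
    (hlow : ∃ c : ℝ, 0 < c ∧ ∃ σ₀ : ℝ, 0 < σ₀ ∧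
      ∀ σ : ℝ, 0 < σ → σ < σ₀ → c / σ ^ N ≤ ‖F σ‖)
    (A : ℝ → ℂ) (hloc : LocallyIntegrableOn A (Set.Ici 1))
    (hA : A =O[atTop] fun x : ℝ => (Real.log x) ^ N)
    (hrepr : ∀ s : ℂ, 0 < s.re →
      F s = s * ∫ x in Set.Ioi (1 : ℝ), A x * (x : ℂ) ^ (-1 - s)) :
    0 < Filter.limsup (fun x : ℝ => ‖A x‖ / (Real.log x) ^ N) atTop :=
  stmt17_general F N hlow A hloc hA hrepr
end
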